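/- If an R-trigger λ is not obsolete for some over-approximation of a rule set R and a head-choice hc before λ, then λ is g-unblockable for hc and every knowledge base with rule set R. -/

import Mathlib

set_option maxHeartbeats 1000000

namespace DisjChase

open scoped Classical
noncomputable section

/-! ### Basic syntax -/

abbrev Var := ℕ
abbrev Pred := ℕ

/-- An atom over a type of terms `T`. -/
structure Atom (T : Type) where
  pred : Pred
  args : List T
deriving DecidableEq

def Atom.map {S T : Type} (f : S → T) (a : Atom S) : Atom T :=
  ⟨a.pred, a.args.map f⟩

/-- A (disjunctive existential) rule: a nonempty body and a nonempty list of
nonempty head conjunctions, all constant- and function-free (atoms over variables). -/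
structure Rule where
  body : List (Atom Var)
  heads : List (List (Atom Var))
  body_ne : body ≠ []
  heads_ne : heads ≠ []
  heads_conj_ne : ∀ h ∈ heads, h ≠ []

def Rule.branching (ρ : Rule) : ℕ := ρ.heads.length

def Rule.bodyVars (ρ : Rule) : List Var := (ρ.body.map Atom.args).flatten

/-- The frontier of a rule: the body variables that also occur in some head disjunct. -/
def Rule.frontierList (ρ : Rule) : List Var :=
  (ρ.bodyVars.filter fun x => ρ.heads.any fun h => h.any fun a => a.args.contains x).dedup

/-- A rule is datalog if it is deterministic and has no existentially quantified variables. -/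
def Rule.Datalog (ρ : Rule) : Prop :=
  ρ.branching = 1 ∧ ∀ h ∈ ρ.heads, ∀ a ∈ h, ∀ x ∈ a.args, x ∈ ρ.bodyVars

/-- A rule is deterministic if it has exactly one head disjunct. -/
def Rule.Deterministic (ρ : Rule) : Prop := ρ.branching = 1

/-- Constants: the special constant `⋆`, ordinary constants, the fresh constants
`c_f` (one for each skolem function symbol `f = f^ρ_{i,y}`), and the fresh constants
`c_x` (one for each variable `x`, used by `σ_uc`). -/
inductive Const where
  | star : Const
  | nat : ℕ → Const
  | skolemConst : Rule → ℕ → Var → Const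
  | varConst : Var → Const

/-- Ground terms: built from constants and the skolem function symbols `f^ρ_{i,y}`. -/
inductive GTerm where
  | const : Const → GTerm
  | func : Rule → ℕ → Var → List GTerm → GTerm

def GTerm.isFunctional : GTerm → Prop
  | .const _ => False
  | .func _ _ _ _ => True

/-- `GTerm.Subterm s t` : `s` is a subterm of `t`. -/
inductive GTerm.Subterm : GTerm → GTerm → Prop
  | refl (t : GTerm) : GTerm.Subterm t t
  | func {u s : GTerm} {args : List GTerm} (ρ : Rule) (i : ℕ) (y : Var) :
      s ∈ args → GTerm.Subterm u s → GTerm.Subterm u (GTerm.func ρ i y args)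

def GTerm.depth : GTerm → ℕ
  | .const _ => 1
  | .func _ _ _ args => 1 + (args.attach.map fun t => GTerm.depth t.1).foldr max 0
termination_by t => sizeOf t
decreasing_by
  have := List.sizeOf_lt_of_mem t.2
  simp only [GTerm.func.sizeOf_spec]
  omega

/-- A term is cyclic if it has a subterm of the form `f(s⃗)` with `f` occurring in `s⃗`. -/
def GTerm.Cyclic (t : GTerm) : Prop :=
  ∃ (ρ : Rule) (i : ℕ) (y : Var) (args : List GTerm),
    GTerm.Subterm (GTerm.func ρ i y args) t ∧
    ∃ s ∈ args, ∃ args' : List GTerm, GTerm.Subterm (GTerm.func ρ i y args') s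

/-- A `ρ`-cyclic term: a term `f(s⃗)` with `f` a function symbol of `sk(ρ)`
occurring also in `s⃗`. -/
def RuleCyclic (ρ : Rule) (t : GTerm) : Prop :=
  ∃ (i : ℕ) (y : Var) (args : List GTerm), t = GTerm.func ρ i y args ∧
    ∃ s ∈ args, ∃ args' : List GTerm, GTerm.Subterm (GTerm.func ρ i y args') s

/-! ### Substitutions, facts, triggers -/

abbrev Subst := Var → GTerm
abbrev Fact := Atom GTerm
abbrev FactSet := Set Fact

/-- The substitution mapping every variable `x` to the fresh constant `c_x`. -/
def sigmaUC : Subst := fun x => GTerm.const (Const.varConst x)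

structure Trigger where
  rule : Rule
  subst : Subst

/-- The skolemizing substitution for disjunct `i`: body variables are mapped by `σ`,
existential variables `y` to the skolem term `f^ρ_{i,y}` applied to the frontier images. -/
def skolemSubst (ρ : Rule) (i : ℕ) (σ : Subst) : Subst := fun y =>
  if y ∈ ρ.bodyVars then σ y
  else GTerm.func ρ i y (ρ.frontierList.map σ)

/-- `out_i(λ) = η_i(sk(ρ))σ` (0-indexed disjuncts). -/
def Trigger.out (lam : Trigger) (i : ℕ) : FactSet :=
  { f | ∃ a ∈ lam.rule.heads.getD i [], f = a.map (skolemSubst lam.rule i lam.subst) }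

def Trigger.outUnion (lam : Trigger) : FactSet :=
  { f | ∃ i < lam.rule.branching, f ∈ lam.out i }

def Trigger.Loaded (lam : Trigger) (F : FactSet) : Prop :=
  ∀ a ∈ lam.rule.body, a.map lam.subst ∈ F

def Trigger.Obsolete (lam : Trigger) (F : FactSet) : Prop :=
  ∃ h ∈ lam.rule.heads, ∃ σ' : Subst,
    (∀ x ∈ lam.rule.bodyVars, σ' x = lam.subst x) ∧ ∀ a ∈ h, a.map σ' ∈ F

/-- A fact set satisfies a rule if all triggers with this rule are not loaded or obsolete. -/
def SatisfiesRule (F : FactSet) (ρ : Rule) : Prop :=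
  ∀ σ : Subst, Trigger.Loaded ⟨ρ, σ⟩ F → Trigger.Obsolete ⟨ρ, σ⟩ F

/-- A ground term is over a rule set if all its function symbols come from
the skolemization of the rule set. -/
inductive GTerm.Over (R : Set Rule) : GTerm → Prop
  | const (c : Const) : GTerm.Over R (GTerm.const c)
  | func {ρ : Rule} {i : ℕ} {y : Var} {args : List GTerm} :
      ρ ∈ R → (∀ t ∈ args, GTerm.Over R t) → GTerm.Over R (GTerm.func ρ i y args)

def RTrigger (R : Set Rule) (lam : Trigger) : Prop :=
  lam.rule ∈ R ∧ ∀ x : Var, (lam.subst x).Over R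

/-- A function-free fact set (i.e., a database). -/
def FunctionFree (F : FactSet) : Prop :=
  ∀ a ∈ F, ∀ t ∈ a.args, ∃ c : Const, t = GTerm.const c

/-! ### Chase trees -/

/-- Iterated edge relation: paths of length `k`. -/
def EPow {V : Type} (E : V → V → Prop) : ℕ → V → V → Prop
  | 0 => Eq
  | n + 1 => fun a c => ∃ b, E a b ∧ EPow E n b c

/-- A chase tree for the knowledge base `⟨R, D⟩` (restricted chase with datalog priority). -/
structure ChaseTree (R : Set Rule) (D : FactSet) where
  V : Type
  E : V → V → Prop
  fl : V → FactSet
  tl : V → Trigger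
  root : V
  reach_root : ∀ v, Relation.ReflTransGen E root v
  no_in_root : ∀ v, ¬ E v root
  parent_unique : ∀ {u w v : V}, E u v → E w v → u = w
  root_label : fl root = D
  expand : ∀ v : V, (∃ c, E v c) →
    ∃ lam : Trigger, RTrigger R lam ∧ lam.Loaded (fl v) ∧ ¬ lam.Obsolete (fl v) ∧
      (¬ lam.rule.Datalog → ∀ ρ ∈ R, ρ.Datalog → SatisfiesRule (fl v) ρ) ∧
      ∃ f : Fin lam.rule.branching → V,
        Function.Injective f ∧ (∀ i, E v (f i)) ∧ (∀ c, E v c → ∃ i, c = f i) ∧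
        ∀ i : Fin lam.rule.branching, fl (f i) = fl v ∪ lam.out i.1 ∧ tl (f i) = lam
  leaf_sat : ∀ v : V, (∀ c, ¬ E v c) → ∀ ρ ∈ R, SatisfiesRule (fl v) ρ
  fairness : ∀ lam : Trigger, RTrigger R lam → ∀ v : V, lam.Loaded (fl v) →
    ∃ k : ℕ, ∀ u : V, EPow E k v u → lam.Obsolete (fl u)

/-- A branch of a chase tree: a maximal path starting at the root. -/
structure Branch {R : Set Rule} {D : FactSet} (T : ChaseTree R D) where
  seq : ℕ → Option T.V
  head : seq 0 = some T.root
  step_some : ∀ n v w, seq n = some v → seq (n + 1) = some w → T.E v w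
  step_max : ∀ n v, seq n = some v → (∃ c, T.E v c) → ∃ w, seq (n + 1) = some w
  step_leaf : ∀ n v, seq n = some v → (∀ c, ¬ T.E v c) → seq (n + 1) = none
  step_none : ∀ n, seq n = none → seq (n + 1) = none

/-- The result of a chase tree: the unions of the fact labels along its branches. -/
def ChaseTree.result {R : Set Rule} {D : FactSet} (T : ChaseTree R D) : Set FactSet :=
  { S | ∃ b : Branch T, S = { f | ∃ n v, b.seq n = some v ∧ f ∈ T.fl v } }

/-- A rule set never-terminates if some knowledge base with this rule set
admits no finite chase tree. -/
def NeverTerminates (R : Set Rule) : Prop :=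
  ∃ D : FactSet, FunctionFree D ∧ ¬ ∃ T : ChaseTree R D, Finite T.V

/-! ### Head-choices and cyclicity sequences -/

/-- A head-choice maps every rule of `R` to one of its (1-indexed) disjuncts. -/
def IsHeadChoice (R : Set Rule) (hc : Rule → ℕ) : Prop :=
  ∀ ρ ∈ R, 1 ≤ hc ρ ∧ hc ρ ≤ ρ.branching

def outHC (hc : Rule → ℕ) (lam : Trigger) : FactSet := lam.out (hc lam.rule - 1)

/-- `b` is the branch `branch(T,hc)` of `T`: every successive label is the parent's
label united with `out_hc` of the applied trigger. -/
def IsHcBranch {R : Set Rule} {D : FactSet} (T : ChaseTree R D) (hc : Rule → ℕ)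
    (b : Branch T) : Prop :=
  ∀ n v w, b.seq n = some v → b.seq (n + 1) = some w →
    T.fl w = T.fl v ∪ outHC hc (T.tl w)

/-- `λ` is g-unblockable for `⟨R,D⟩` and `hc`. -/
def GUnblockable (R : Set Rule) (D : FactSet) (hc : Rule → ℕ) (lam : Trigger) : Prop :=
  ∀ T : ChaseTree R D, ∀ b : Branch T, IsHcBranch T hc b →
    ∀ n v, b.seq n = some v → lam.Loaded (T.fl v) →
      ∃ m u, b.seq m = some u ∧ outHC hc lam ⊆ T.fl u

/-- `F_i(K, hc, Λ)` for a sequence `Λ` of triggers (0-indexed: `Λ k` is applied to `F_k`). -/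
def chaseSeq (D : FactSet) (hc : Rule → ℕ) (Λ : ℕ → Trigger) : ℕ → FactSet
  | 0 => D
  | n + 1 => chaseSeq D hc Λ n ∪ outHC hc (Λ n)

def SeqLoaded (D : FactSet) (hc : Rule → ℕ) (Λ : ℕ → Trigger) : Prop :=
  ∀ n, (Λ n).Loaded (chaseSeq D hc Λ n)

/-- `t` occurs in the fact set `F`. -/
def GTerm.OccursIn (t : GTerm) (F : FactSet) : Prop :=
  ∃ a ∈ F, ∃ s ∈ a.args, t.Subterm s

def SeqGrowing (D : FactSet) (hc : Rule → ℕ) (Λ : ℕ → Trigger) : Prop :=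
  ∀ i, ∃ j, i < j ∧ ∃ t : GTerm,
    t.OccursIn (chaseSeq D hc Λ j) ∧ ¬ t.OccursIn (chaseSeq D hc Λ i)

/-- A cyclicity sequence: an (infinite) sequence of `R`-triggers that is loaded,
growing, and g-unblockable. -/
def CyclicitySequence (R : Set Rule) (D : FactSet) (hc : Rule → ℕ) (Λ : ℕ → Trigger) : Prop :=
  (∀ n, RTrigger R (Λ n)) ∧ SeqLoaded D hc Λ ∧ SeqGrowing D hc Λ ∧
    ∀ n, GUnblockable R D hc (Λ n)

/-! ### Over-approximations and unblockability -/

/-- `F` is an over-approximation of `R` and `hc` before `λ`. -/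
def IsOverApprox (R : Set Rule) (hc : Rule → ℕ) (lam : Trigger) (F : FactSet) : Prop :=
  ∃ h : GTerm → GTerm,
    (∀ x ∈ lam.rule.frontierList, h (lam.subst x) = lam.subst x) ∧
    ∀ D : FactSet, FunctionFree D → ∀ T : ChaseTree R D, ∀ b : Branch T,
      IsHcBranch T hc b → ∀ n u, b.seq n = some u → ¬ outHC hc lam ⊆ T.fl u →
        (Atom.map h) '' (T.fl u) ⊆ F

/-- The substitution mapping the frontier of `ρ` (in order) to the given argument list. -/
def frontierSubst (ρ : Rule) (args : List GTerm) : Subst := fun x =>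
  args.getD (ρ.frontierList.idxOf x) (GTerm.const Const.star)

/-- Birth facts of a term. -/
def GTerm.births : GTerm → FactSet
  | .const _ => ∅
  | .func ρ i _ args =>
      Trigger.out ⟨ρ, frontierSubst ρ args⟩ i ∪
        (args.attach.map fun s => GTerm.births s.1).foldr (· ∪ ·) ∅
termination_by t => sizeOf t
decreasing_by
  have := List.sizeOf_lt_of_mem s.2
  simp only [GTerm.func.sizeOf_spec]
  omega

/-- Birth facts of a trigger. -/
def Trigger.births (lam : Trigger) : FactSet :=
  { f | ∃ x ∈ lam.rule.frontierList, f ∈ GTerm.births (lam.subst x) }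

/-- The term-skeleton of a trigger: the terms occurring in its birth facts together
with the constants in frontier positions. -/
def skel (lam : Trigger) : Set GTerm :=
  { t | ∃ a ∈ lam.births, ∃ s ∈ a.args, t.Subterm s } ∪
  { t | ∃ x ∈ lam.rule.frontierList, lam.subst x = t ∧ ∃ c, t = GTerm.const c }

/-- `h^⋆_λ`. -/
def hstar (lam : Trigger) : GTerm → GTerm := fun t =>
  if t ∈ skel lam then t else GTerm.const Const.star

/-- `h^uc_λ`. -/
def huc (lam : Trigger) : GTerm → GTerm := fun t =>
  if t ∈ skel lam then t
  else
    match t with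
    | GTerm.func ρ i y _ => GTerm.const (Const.skolemConst ρ i y)
    | GTerm.const (Const.skolemConst ρ i y) => GTerm.const (Const.skolemConst ρ i y)
    | _ => GTerm.const Const.star

def hImg (h : GTerm → GTerm) (F : FactSet) : FactSet := (Atom.map h) '' F

def predsOf (R : Set Rule) : Set Pred :=
  { p | ∃ ρ ∈ R, (∃ a ∈ ρ.body, a.pred = p) ∨ ∃ h ∈ ρ.heads, ∃ a ∈ h, a.pred = p }

def skelConsts (lam : Trigger) : Set Const :=
  { c | ∃ t ∈ skel lam, GTerm.Subterm (GTerm.const c) t }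

/-- All facts over a predicate of `R` and constants from `skel(λ) ∪ {⋆}`. -/
def baseFacts (R : Set Rule) (lam : Trigger) : FactSet :=
  { a | a.pred ∈ predsOf R ∧
    ∀ t ∈ a.args, ∃ c : Const, t = GTerm.const c ∧ (c ∈ skelConsts lam ∨ c = Const.star) }

def Oclosed (R : Set Rule) (hc : Rule → ℕ) (lam : Trigger) (h : GTerm → GTerm)
    (F : FactSet) : Prop :=
  baseFacts R lam ⊆ F ∧ lam.births ⊆ F ∧
  ∀ lam' : Trigger, RTrigger R lam' → lam'.Loaded F → outHC hc lam' ≠ outHC hc lam →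
    hImg h (outHC hc lam') ⊆ F

/-- `O(R, hc, λ, h)`. -/
def Oset (R : Set Rule) (hc : Rule → ℕ) (lam : Trigger) (h : GTerm → GTerm) : FactSet :=
  ⋂₀ { F | Oclosed R hc lam h F }

def OclosedND (R : Set Rule) (lam : Trigger) (h : GTerm → GTerm) (F : FactSet) : Prop :=
  baseFacts R lam ⊆ F ∧ lam.births ⊆ F ∧
  ∀ lam' : Trigger, RTrigger R lam' → lam'.Loaded F →
    (lam'.rule = lam.rule → ∃ i < lam.rule.branching, lam'.out i ≠ lam.out i) →
    hImg h lam'.outUnion ⊆ F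

/-- `O(R, λ, h)`. -/
def OsetND (R : Set Rule) (lam : Trigger) (h : GTerm → GTerm) : FactSet :=
  ⋂₀ { F | OclosedND R lam h F }

/-- `λ` is `⋆`-unblockable for `R`. -/
def StarUnblockable (R : Set Rule) (lam : Trigger) : Prop :=
  lam.rule.Datalog ∨ ¬ lam.Obsolete (OsetND R lam (hstar lam))

/-- `λ` is `uc`-unblockable for `R` and `hc`. -/
def UcUnblockable (R : Set Rule) (hc : Rule → ℕ) (lam : Trigger) : Prop :=
  lam.rule.Datalog ∨ ¬ lam.Obsolete (Oset R hc lam (huc lam))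

/-! ### Constant mappings and reversibility -/

abbrev CMap := Const → Option GTerm

/-- Apply a constant mapping to a ground term, replacing constants in its domain. -/
def applyCM (g : CMap) : GTerm → GTerm
  | .const c => (g c).getD (GTerm.const c)
  | .func ρ i y args => GTerm.func ρ i y (args.attach.map fun s => applyCM g s.1)
termination_by t => sizeOf t
decreasing_by
  have := List.sizeOf_lt_of_mem s.2
  simp only [GTerm.func.sizeOf_spec]
  omega

/-- `g` is reversible for the (subterm-closed) set of terms `𝒯`. -/
def Reversible (g : CMap) (𝒯 : Set GTerm) : Prop :=
  (∀ c : Const, GTerm.const c ∈ 𝒯 → (g c).isSome) ∧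
  (∀ t ∈ 𝒯, ∀ s ∈ 𝒯, t ≠ s → applyCM g t ≠ applyCM g s) ∧
  (∀ c : Const, GTerm.const c ∈ 𝒯 →
    ∀ s : GTerm, s.Subterm (applyCM g (GTerm.const c)) →
      ∀ u ∈ 𝒯, u.isFunctional → applyCM g u ≠ s)

def cmImg (g : CMap) (F : FactSet) : FactSet := (Atom.map (applyCM g)) '' F

/-! ### Cyclicity prefixes -/

/-- The rule-database `D_ρ = body(ρ)σ_uc`. -/
def ruleDB (ρ : Rule) : FactSet := { f | ∃ a ∈ ρ.body, f = a.map sigmaUC }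

/-- A cyclicity prefix for `R`, `hc`, and `ρ ∈ R`. -/
structure CyclicityPrefix (R : Set Rule) (hc : Rule → ℕ) (ρ : Rule) where
  n : ℕ
  npos : 0 < n
  trig : ℕ → Trigger
  g : CMap
  rtrig : ∀ i ≤ n, RTrigger R (trig i)
  first_rule : (trig 0).rule = ρ
  first_subst : (trig 0).subst = sigmaUC
  loaded : ∀ i ≤ n, (trig i).Loaded (chaseSeq (ruleDB ρ) hc trig i)
  uc_unbl : ∀ i, 1 ≤ i → i ≤ n → UcUnblockable R hc (trig i)
  g_unbl : GUnblockable R (ruleDB ρ) hc (trig 0)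
  last_rule : (trig n).rule = ρ
  last_cyclic : ∃ t : GTerm, RuleCyclic ρ t ∧ t.OccursIn (outHC hc (trig n))
  g_comp : applyCM g ∘ (trig 0).subst = (trig n).subst
  g_rev : ∀ i, 1 ≤ i → i ≤ n → ∀ j : ℕ,
    Reversible g (skel ⟨(trig i).rule, (applyCM g)^[j] ∘ (trig i).subst⟩)

/-- The infinite sequence `Λ^∞` obtained by unfolding a cyclicity prefix. -/
def prefixInf {R : Set Rule} {hc : Rule → ℕ} {ρ : Rule} (P : CyclicityPrefix R hc ρ) :
    ℕ → Trigger := fun k =>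
  if k = 0 then P.trig 0
  else ⟨(P.trig ((k - 1) % P.n + 1)).rule,
        (applyCM P.g)^[(k - 1) / P.n] ∘ (P.trig ((k - 1) % P.n + 1)).subst⟩

/-! ### RPC, RPC_s, DRPC -/

def RPCclosed (R : Set Rule) (hc : Rule → ℕ) (ρ : Rule) (F : FactSet) : Prop :=
  ruleDB ρ ⊆ F ∧ outHC hc ⟨ρ, sigmaUC⟩ ⊆ F ∧
  ∀ lam : Trigger, RTrigger R lam →
    (∀ x ∈ lam.rule.bodyVars, ¬ (lam.subst x).Cyclic) →
    lam.Loaded F → UcUnblockable R hc lam →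
    (lam.rule = ρ → Set.InjOn lam.subst { x | x ∈ lam.rule.bodyVars }) →
    outHC hc lam ⊆ F

/-- `RPC(R, hc, ρ)`. -/
def RPCset (R : Set Rule) (hc : Rule → ℕ) (ρ : Rule) : FactSet :=
  ⋂₀ { F | RPCclosed R hc ρ F }

/-- `R` is restricted prefix-cyclic. -/
def IsRPC (R : Set Rule) : Prop :=
  ∃ hc : Rule → ℕ, IsHeadChoice R hc ∧
    ∃ ρ ∈ R, ∃ t : GTerm, RuleCyclic ρ t ∧ t.OccursIn (RPCset R hc ρ)

/-- The head-choice `hc_i`. -/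
def hcIdx (i : ℕ) : Rule → ℕ := fun ρ => if i ≤ ρ.branching then i else ρ.branching

/-- `branching(R)`: the least bound on the branching of the rules of `R`. -/
def branchingR (R : Set Rule) : ℕ := sInf { b | ∀ ρ ∈ R, ρ.branching ≤ b }

/-- `R` is `RPC_s`. -/
def IsRPCs (R : Set Rule) : Prop :=
  ∃ i : ℕ, 1 ≤ i ∧ i ≤ branchingR R ∧
    ∃ ρ ∈ R, ∃ t : GTerm, RuleCyclic ρ t ∧ t.OccursIn (RPCset R (hcIdx i) ρ)

def DRPCclosed (R : Set Rule) (ρ : Rule) (F : FactSet) : Prop :=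
  ruleDB ρ ⊆ F ∧ Trigger.out ⟨ρ, sigmaUC⟩ 0 ⊆ F ∧
  ∀ lam : Trigger, RTrigger R lam → lam.rule.Deterministic →
    (∀ x ∈ lam.rule.bodyVars, ¬ (lam.subst x).Cyclic) →
    lam.Loaded F → StarUnblockable R lam →
    (lam.rule = ρ → Set.InjOn lam.subst { x | x ∈ lam.rule.bodyVars }) →
    lam.out 0 ⊆ F

/-- `DRPC(R, ρ)`. -/
def DRPCset (R : Set Rule) (ρ : Rule) : FactSet :=
  ⋂₀ { F | DRPCclosed R ρ F }

/-- `R` is deterministic restricted prefix-cyclic. -/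
def IsDRPC (R : Set Rule) : Prop :=
  ∃ ρ ∈ R, ρ.Deterministic ∧ ∃ t : GTerm, RuleCyclic ρ t ∧ t.OccursIn (DRPCset R ρ)


lemma epow_snoc {V : Type} {E : V → V → Prop} :
    ∀ (j : ℕ) {a b c : V}, EPow E j a b → E b c → EPow E (j + 1) a c := by
  intro j
  induction j with
  | zero => intro a b c hab hbc; cases hab; exact ⟨c, hbc, rfl⟩
  | succ j ih =>
      rintro a b c ⟨d, had, hdb⟩ hbc
      exact ⟨d, had, ih hdb hbc⟩

lemma mem_frontierList_of_head {ρ : Rule} {x : Var} (hxb : x ∈ ρ.bodyVars)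
    {hd : List (Atom Var)} (hhd : hd ∈ ρ.heads) {a : Atom Var} (ha : a ∈ hd)
    (hx : x ∈ a.args) : x ∈ ρ.frontierList := by
  unfold Rule.frontierList
  rw [List.mem_dedup, List.mem_filter]
  refine ⟨hxb, ?_⟩
  rw [List.any_eq_true]
  refine ⟨hd, hhd, ?_⟩
  rw [List.any_eq_true]
  exact ⟨a, ha, by simpa using hx⟩

/-- Lemma: if `λ` is not obsolete for some over-approximation of `R` and `hc`
before `λ`, then `λ` is g-unblockable for `hc` and every knowledge base with `R`. -/
theorem gUnblockable_of_overApprox (R : Set Rule) (hc : Rule → ℕ) (lam : Trigger)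
    (hlam : RTrigger R lam) (F : FactSet) (hF : IsOverApprox R hc lam F)
    (hobs : ¬ lam.Obsolete F) :
    ∀ D : FactSet, FunctionFree D → GUnblockable R D hc lam := by
  intro D hD T b hb n v hv hload
  by_contra hnot
  push_neg at hnot
  obtain ⟨hfun, hfix, hmain⟩ := hF
  have himg : ∀ m u, b.seq m = some u → (Atom.map hfun) '' (T.fl u) ⊆ F := by
    intro m u hu
    exact hmain D hD T b hb m u hu (hnot m u hu)
  -- along the branch from v: paths and monotonicity
  have hstep : ∀ j w, b.seq (n + j) = some w → EPow T.E j v w ∧ T.fl v ⊆ T.fl w := by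
    intro j
    induction j with
    | zero =>
        intro w hw
        rw [Nat.add_zero, hv] at hw
        cases hw
        exact ⟨rfl, Set.Subset.rfl⟩
    | succ j ih =>
        intro w hw
        rw [Nat.add_succ] at hw
        cases hp : b.seq (n + j) with
        | none =>
            have := b.step_none (n + j) hp
            rw [this] at hw; cases hw
        | some w' =>
            obtain ⟨hpow, hsub⟩ := ih w' hp
            have hedge := b.step_some (n + j) w' w hp hw
            have hfl := hb (n + j) w' w hp hw
            refine ⟨epow_snoc j hpow hedge, ?_⟩
            rw [hfl]
            exact hsub.trans Set.subset_union_left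
  obtain ⟨k, hk⟩ := T.fairness lam hlam v hload
  -- find a vertex on the branch where `lam` is obsolete
  have hobsu : ∃ m u, b.seq m = some u ∧ lam.Obsolete (T.fl u) := by
    cases hnk : b.seq (n + k) with
    | some u =>
        obtain ⟨hpow, _⟩ := hstep k u hnk
        exact ⟨n + k, u, hnk, hk u hpow⟩
    | none =>
        have hP : ∃ j, b.seq (n + j) = none := ⟨k, hnk⟩
        set j0 := Nat.find hP with hj0
        have hj0spec : b.seq (n + j0) = none := Nat.find_spec hP
        have hj0pos : j0 ≠ 0 := by
          intro h0
          rw [h0, Nat.add_zero, hv] at hj0spec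
          cases hj0spec
        obtain ⟨j1, hj1⟩ : ∃ j1, j0 = j1 + 1 := ⟨j0 - 1, (Nat.succ_pred_eq_of_pos (Nat.pos_of_ne_zero hj0pos)).symm⟩
        have hj1lt : j1 < j0 := by omega
        have hsome : b.seq (n + j1) ≠ none := Nat.find_min hP hj1lt
        cases hw : b.seq (n + j1) with
        | none => exact absurd hw hsome
        | some w =>
            obtain ⟨_, hsub⟩ := hstep j1 w hw
            have hleaf : ∀ c, ¬ T.E w c := by
              intro c hc
              obtain ⟨w', hw'⟩ := b.step_max (n + j1) w hw ⟨c, hc⟩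
              have : n + j1 + 1 = n + j0 := by omega
              rw [this, hj0spec] at hw'
              cases hw'
            have hloadw : lam.Loaded (T.fl w) := fun a ha => hsub (hload a ha)
            exact ⟨n + j1, w, hw, T.leaf_sat w hleaf lam.rule hlam.1 lam.subst hloadw⟩
  obtain ⟨m, u, hu, hd, hhd, σ', hagree, hin⟩ := hobsu
  apply hobs
  refine ⟨hd, hhd, fun x => if x ∈ lam.rule.bodyVars then lam.subst x else hfun (σ' x),
    fun x hx => if_pos hx, ?_⟩
  intro a ha
  have hx : ∀ x ∈ a.args,
      (if x ∈ lam.rule.bodyVars then lam.subst x else hfun (σ' x)) = hfun (σ' x) := by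
    intro x hxmem
    by_cases hxb : x ∈ lam.rule.bodyVars
    · rw [if_pos hxb, hagree x hxb]
      exact (hfix x (mem_frontierList_of_head hxb hhd ha hxmem)).symm
    · rw [if_neg hxb]
  have heq : a.map (fun x => if x ∈ lam.rule.bodyVars then lam.subst x else hfun (σ' x))
      = Atom.map hfun (a.map σ') := by
    simp only [Atom.map, List.map_map]
    exact congrArg (Atom.mk a.pred) (List.map_congr_left hx)
  rw [heq]
  exact himg m u hu ⟨a.map σ', hin a ha, rfl⟩

end
end DisjChase
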